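/- Finite decision threshold for detectability of switched affine models: for all positive integers s, s̄ and n there exists a finite N (one may take N = N(s·s̄, 4n), the pathwise observability threshold for s·s̄ modes and state dimension 4n) such that for every pair of autonomous switched affine models G (s modes, matrices A_i ∈ ℝ^{n×n}, C_i ∈ ℝ^{1×n}, affine term f ∈ ℝ^n) and Ḡ (s̄ modes, matrices Ā_j, C̄_j, affine term f̄, same dimensions), the following are equivalent: (i) Ḡ is not T-detectable for G for any finite T, i.e. for every T ∈ ℕ there exist initial states x_0, x̄_0 ∈ ℝ^n and mode sequences σ, σ̄ of length T such that the outputs of G and Ḡ coincide at all times 0,…,T−1; (ii) there exist initial states and mode sequences of length N with identical outputs at all times 0,…,N−1. -/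

import Mathlib

/-!
The data of a switched linear system together with an initial state form a point of a
finite-dimensional space, and each output `y_k` along a mode sequence is a polynomial in that
point. So the set `Z_T` of points admitting a mode sequence with zero output on `[0, T)` is an
algebraic set (a finite union over the prefixes of length `T`), and `Z_T` decreases in `T`. By
Hilbert's basis theorem this chain of algebraic sets stabilises at some `T₀`, uniformly in the
system. A pair of switched affine models run in parallel is a linear system on `(x, x̄, 1)` with
`s * s̄` modes and output `y - ȳ`, so the threshold for zero outputs is one for matching outputs.
-/

open Matrix

/-- Trajectory of the autonomous switched affine system
`x_{k+1} = A_{σ_k} x_k + f` from initial state `x0`. -/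
def swaTraj {n s : ℕ} (A : Fin s → Matrix (Fin n) (Fin n) ℝ) (f : Fin n → ℝ)
    (σ : ℕ → Fin s) (x0 : Fin n → ℝ) : ℕ → Fin n → ℝ
  | 0 => x0
  | k + 1 => (A (σ k)).mulVec (swaTraj A f σ x0 k) + f

/-- Scalar output `y_k = C_{σ_k} x_k` of the autonomous switched affine
system. -/
def swaOut {n s : ℕ} (A : Fin s → Matrix (Fin n) (Fin n) ℝ)
    (C : Fin s → Fin n → ℝ) (f : Fin n → ℝ) (σ : ℕ → Fin s)
    (x0 : Fin n → ℝ) (k : ℕ) : ℝ :=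
  C (σ k) ⬝ᵥ swaTraj A f σ x0 k

namespace MvPolynomial

variable {V K : Type*} [Field K]

theorem zeroLocus_iInf {α : Type*} [Finite α] (I : α → Ideal (MvPolynomial V K)) :
    zeroLocus K (⨅ a, I a) = ⋃ a, zeroLocus K (I a) := by
  refine le_antisymm (fun z hz => ?_)
    (Set.iUnion_subset fun a => zeroLocus_anti_mono (iInf_le I a))
  by_contra hz'
  simp only [Set.mem_iUnion, mem_zeroLocus_iff, not_exists, not_forall] at hz'
  choose p hpI hpz using hz'
  have := Fintype.ofFinite α
  have hprod : aeval z (∏ a, p a) ≠ 0 := by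
    rw [map_prod]
    exact Finset.prod_ne_zero_iff.mpr fun a _ => hpz a
  exact hprod (hz _ (Ideal.mem_iInf.mpr fun a =>
    Ideal.mem_of_dvd _ (Finset.dvd_prod_of_mem p (Finset.mem_univ a)) (hpI a)))

theorem zeroLocus_vanishingIdeal_zeroLocus (I : Ideal (MvPolynomial V K)) :
    zeroLocus K (vanishingIdeal K (zeroLocus K I)) = zeroLocus K I :=
  zeroLocus_vanishingIdeal_galoisConnection.l_u_l_eq_l I

theorem exists_forall_ge_eq_of_antitone_zeroLocus [Finite V] {Z : ℕ → Set (V → K)}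
    (hZ : Antitone Z) (hclosed : ∀ T, ∃ I : Ideal (MvPolynomial V K), Z T = zeroLocus K I) :
    ∃ T₀, ∀ T ≥ T₀, Z T = Z T₀ := by
  have hZ' : ∀ T, Z T = zeroLocus K (vanishingIdeal K (Z T)) := fun T => by
    obtain ⟨I, hI⟩ := hclosed T
    rw [hI, zeroLocus_vanishingIdeal_zeroLocus]
  obtain ⟨T₀, hT₀⟩ := monotone_stabilizes_iff_noetherian.mpr inferInstance
    ⟨fun T => vanishingIdeal K (Z T), fun _ _ h => vanishingIdeal_anti_mono (hZ h)⟩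
  exact ⟨T₀, fun T hT => by rw [hZ' T, hZ' T₀]; exact congrArg _ (hT₀ T hT).symm⟩

end MvPolynomial

open MvPolynomial

def IsCausal {ι β : Type*} (q : (ℕ → ι) → ℕ → β) : Prop :=
  ∀ σ τ k, (∀ j ≤ k, σ j = τ j) → q σ k = q τ k

section PathZeroLocus

variable {ι V K : Type*} [Field K] (q : (ℕ → ι) → ℕ → MvPolynomial V K)

def pathZeroLocus (T : ℕ) : Set (V → K) :=
  {z | ∃ σ, ∀ k < T, eval z (q σ k) = 0}

theorem mem_pathZeroLocus {T : ℕ} {z : V → K} :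
    z ∈ pathZeroLocus q T ↔ ∃ σ, ∀ k < T, eval z (q σ k) = 0 :=
  Iff.rfl

theorem pathZeroLocus_antitone : Antitone (pathZeroLocus q) :=
  fun _ _ h _ ⟨σ, hσ⟩ => ⟨σ, fun k hk => hσ k (hk.trans_le h)⟩

variable {q} [Finite ι]

theorem exists_pathZeroLocus_eq_zeroLocus (hq : IsCausal q) (T : ℕ) :
    ∃ I : Ideal (MvPolynomial V K), pathZeroLocus q T = zeroLocus K I := by
  -- By causality, `pathZeroLocus q T` is the union over the finitely many prefixes `w` of
  -- length `T` of the common zeros of the `q σ k` (`k < T`), for any `σ` extending `w`.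
  let prefixes := Set.range fun (σ : ℕ → ι) (k : Fin T) => σ k
  refine ⟨⨅ w : prefixes, Ideal.span (Set.range fun k : Fin T => q w.2.choose k), ?_⟩
  ext z
  simp only [mem_pathZeroLocus, zeroLocus_iInf, zeroLocus_span, Set.mem_iUnion,
    Set.forall_mem_range]
  constructor
  · rintro ⟨σ, hσ⟩
    refine ⟨⟨_, σ, rfl⟩, fun k => ?_⟩
    have hprefix := (⟨_, σ, rfl⟩ : prefixes).2.choose_spec
    rw [hq _ σ k fun j hj => congrFun hprefix ⟨j, hj.trans_lt k.2⟩]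
    exact hσ k k.2
  · rintro ⟨w, hw⟩
    exact ⟨w.2.choose, fun k hk => hw ⟨k, hk⟩⟩

theorem exists_forall_mem_pathZeroLocus_of_mem [Finite V] (hq : IsCausal q) :
    ∃ N, 0 < N ∧ ∀ z ∈ pathZeroLocus q N, ∀ T, z ∈ pathZeroLocus q T := by
  obtain ⟨T₀, hT₀⟩ := exists_forall_ge_eq_of_antitone_zeroLocus (pathZeroLocus_antitone q)
    (exists_pathZeroLocus_eq_zeroLocus hq)
  refine ⟨T₀ + 1, T₀.succ_pos, fun z hz T => ?_⟩
  rw [hT₀ _ T₀.le_succ] at hz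
  rcases le_total T T₀ with hT | hT
  · exact pathZeroLocus_antitone q hT hz
  · rwa [hT₀ T hT]

end PathZeroLocus

namespace SwitchedLinear

variable {ι ν R S : Type*} [Fintype ν] [CommSemiring R] [CommSemiring S]

def traj (M : ι → Matrix ν ν R) (σ : ℕ → ι) (x : ν → R) : ℕ → ν → R
  | 0 => x
  | k + 1 => M (σ k) *ᵥ traj M σ x k

def output (M : ι → Matrix ν ν R) (D : ι → ν → R) (σ : ℕ → ι) (x : ν → R) (k : ℕ) : R :=
  D (σ k) ⬝ᵥ traj M σ x k

variable (M : ι → Matrix ν ν R) (D : ι → ν → R) (x : ν → R)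

theorem traj_congr {σ τ : ℕ → ι} {k : ℕ} (h : ∀ j < k, σ j = τ j) :
    traj M σ x k = traj M τ x k := by
  induction k with
  | zero => rfl
  | succ k ih =>
    rw [traj, traj, ih fun j hj => h j (hj.trans k.lt_succ_self), h k k.lt_succ_self]

theorem isCausal_output : IsCausal fun σ k => output M D σ x k := fun σ τ k h => by
  simp only [output, h k le_rfl, traj_congr M x fun j hj => h j hj.le]

theorem traj_map (φ : R →+* S) (σ : ℕ → ι) (k : ℕ) :
    traj (fun a => (M a).map φ) σ (φ ∘ x) k = φ ∘ traj M σ x k := by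
  induction k with
  | zero => rfl
  | succ k ih => ext i; simp only [traj, ih, Function.comp_apply, RingHom.map_mulVec]

theorem output_map (φ : R →+* S) (σ : ℕ → ι) (k : ℕ) :
    output (fun a => (M a).map φ) (fun a => φ ∘ D a) σ (φ ∘ x) k = φ (output M D σ x k) := by
  rw [output, output, traj_map, RingHom.map_dotProduct]

section Generic

variable (ι ν) (K : Type*) [Field K]

abbrev Coord : Type _ := (ι × ν × ν) ⊕ (ι × ν) ⊕ ν

noncomputable def genericMatrix (a : ι) : Matrix ν ν (MvPolynomial (Coord ι ν) K) :=
  Matrix.of fun i j => X (.inl (a, i, j))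

noncomputable def genericOutputVec (a : ι) : ν → MvPolynomial (Coord ι ν) K :=
  fun i => X (.inr (.inl (a, i)))

noncomputable def genericState : ν → MvPolynomial (Coord ι ν) K :=
  fun i => X (.inr (.inr i))

variable {ι ν K}

def coords (M : ι → Matrix ν ν K) (D : ι → ν → K) (x : ν → K) : Coord ι ν → K :=
  Sum.elim (fun p => M p.1 p.2.1 p.2.2) (Sum.elim (fun p => D p.1 p.2) x)

theorem eval_coords_output_generic (M : ι → Matrix ν ν K) (D : ι → ν → K) (x : ν → K)
    (σ : ℕ → ι) (k : ℕ) :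
    eval (coords M D x) (output (genericMatrix ι ν K) (genericOutputVec ι ν K) σ
      (genericState ι ν K) k) = output M D σ x k := by
  rw [← output_map]
  congr <;> ext <;> simp [coords, genericMatrix, genericOutputVec, genericState]

theorem exists_zeroOutput_threshold [Finite ι] :
    ∃ N, 0 < N ∧ ∀ (M : ι → Matrix ν ν K) (D : ι → ν → K) (x : ν → K),
      (∃ σ, ∀ k < N, output M D σ x k = 0) → ∀ T, ∃ σ, ∀ k < T, output M D σ x k = 0 := by
  obtain ⟨N, hN, hthreshold⟩ := exists_forall_mem_pathZeroLocus_of_mem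
    (isCausal_output (genericMatrix ι ν K) (genericOutputVec ι ν K) (genericState ι ν K))
  refine ⟨N, hN, fun M D x hx T => ?_⟩
  have hT := hthreshold (coords M D x)
    (by simpa only [mem_pathZeroLocus, eval_coords_output_generic] using hx) T
  simpa only [mem_pathZeroLocus, eval_coords_output_generic] using hT

end Generic

end SwitchedLinear

namespace SwitchedAffinePair

open SwitchedLinear

variable {n s sb : ℕ} (A : Fin s → Matrix (Fin n) (Fin n) ℝ) (C : Fin s → Fin n → ℝ)
  (f : Fin n → ℝ) (Ab : Fin sb → Matrix (Fin n) (Fin n) ℝ) (Cb : Fin sb → Fin n → ℝ)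
  (fb : Fin n → ℝ)

def liftState (x xb : Fin n → ℝ) : (Fin n ⊕ Fin n) ⊕ Unit → ℝ :=
  Sum.elim (Sum.elim x xb) 1

def pairMatrix (a : Fin s × Fin sb) :
    Matrix ((Fin n ⊕ Fin n) ⊕ Unit) ((Fin n ⊕ Fin n) ⊕ Unit) ℝ :=
  fromBlocks (fromBlocks (A a.1) 0 0 (Ab a.2)) (replicateCol Unit (Sum.elim f fb)) 0 1

def pairOutputVec (a : Fin s × Fin sb) : (Fin n ⊕ Fin n) ⊕ Unit → ℝ :=
  Sum.elim (Sum.elim (C a.1) (-Cb a.2)) 0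

theorem pairMatrix_mulVec_liftState (a : Fin s × Fin sb) (x xb : Fin n → ℝ) :
    pairMatrix A f Ab fb a *ᵥ liftState x xb =
      liftState (A a.1 *ᵥ x + f) (Ab a.2 *ᵥ xb + fb) := by
  ext ((i | i) | i) <;> simp [pairMatrix, liftState, mulVec, dotProduct]

theorem traj_pairMatrix (σ : ℕ → Fin s) (σb : ℕ → Fin sb) (x₀ xb₀ : Fin n → ℝ) (k : ℕ) :
    traj (pairMatrix A f Ab fb) (fun j => (σ j, σb j)) (liftState x₀ xb₀) k =
      liftState (swaTraj A f σ x₀ k) (swaTraj Ab fb σb xb₀ k) := by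
  induction k with
  | zero => rfl
  | succ k ih => rw [traj, ih, pairMatrix_mulVec_liftState]; rfl

theorem output_pair (σ : ℕ → Fin s) (σb : ℕ → Fin sb) (x₀ xb₀ : Fin n → ℝ) (k : ℕ) :
    output (pairMatrix A f Ab fb) (pairOutputVec C Cb) (fun j => (σ j, σb j))
      (liftState x₀ xb₀) k = swaOut A C f σ x₀ k - swaOut Ab Cb fb σb xb₀ k := by
  rw [output, traj_pairMatrix]
  simp [pairOutputVec, liftState, swaOut, dotProduct, Fintype.sum_sum_type, sub_eq_add_neg]

end SwitchedAffinePair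

theorem finite_detectability_threshold_general (s sb n : ℕ) :
    ∃ N : ℕ, 0 < N ∧
      ∀ (A : Fin s → Matrix (Fin n) (Fin n) ℝ) (C : Fin s → Fin n → ℝ)
        (f : Fin n → ℝ)
        (Ab : Fin sb → Matrix (Fin n) (Fin n) ℝ) (Cb : Fin sb → Fin n → ℝ)
        (fb : Fin n → ℝ),
        ((∀ T : ℕ, ∃ (x0 xb0 : Fin n → ℝ) (σ : ℕ → Fin s) (σb : ℕ → Fin sb),
            ∀ k < T, swaOut A C f σ x0 k = swaOut Ab Cb fb σb xb0 k) ↔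
          (∃ (x0 xb0 : Fin n → ℝ) (σ : ℕ → Fin s) (σb : ℕ → Fin sb),
            ∀ k < N, swaOut A C f σ x0 k = swaOut Ab Cb fb σb xb0 k)) := by
  obtain ⟨N, hN, hthreshold⟩ := SwitchedLinear.exists_zeroOutput_threshold
    (ι := Fin s × Fin sb) (ν := (Fin n ⊕ Fin n) ⊕ Unit) (K := ℝ)
  refine ⟨N, hN, fun A C f Ab Cb fb => ⟨fun h => h N, ?_⟩⟩
  rintro ⟨x₀, xb₀, σ, σb, hmatch⟩ T
  obtain ⟨τ, hτ⟩ := hthreshold (SwitchedAffinePair.pairMatrix A f Ab fb)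
    (SwitchedAffinePair.pairOutputVec C Cb) (SwitchedAffinePair.liftState x₀ xb₀)
    ⟨fun j => (σ j, σb j), fun k hk => by
      rw [SwitchedAffinePair.output_pair, hmatch k hk, sub_self]⟩ T
  refine ⟨x₀, xb₀, fun k => (τ k).1, fun k => (τ k).2, fun k hk => sub_eq_zero.mp ?_⟩
  rw [← SwitchedAffinePair.output_pair]
  exact hτ k hk

/-- finite decision threshold for detectability of switched
affine models.  For all positive `s`, `s̄`, `n` there is a finite `N` such
that for every pair of autonomous switched affine models `G` (`s` modes) and
`Ḡ` (`s̄` modes), both with state dimension `n` and scalar output, the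
following are equivalent: (i) for every horizon `T` there are initial states
and mode sequences making the two outputs coincide on `0, …, T-1` (i.e. `Ḡ`
is not `T`-detectable for `G` for any finite `T`); (ii) the same holds for the
single horizon `N`. -/
theorem finite_detectability_threshold (s sb n : ℕ)
    (hs : 0 < s) (hsb : 0 < sb) (hn : 0 < n) :
    ∃ N : ℕ, 0 < N ∧
      ∀ (A : Fin s → Matrix (Fin n) (Fin n) ℝ) (C : Fin s → Fin n → ℝ)
        (f : Fin n → ℝ)
        (Ab : Fin sb → Matrix (Fin n) (Fin n) ℝ) (Cb : Fin sb → Fin n → ℝ)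
        (fb : Fin n → ℝ),
        ((∀ T : ℕ, ∃ (x0 xb0 : Fin n → ℝ) (σ : ℕ → Fin s) (σb : ℕ → Fin sb),
            ∀ k < T, swaOut A C f σ x0 k = swaOut Ab Cb fb σb xb0 k) ↔
          (∃ (x0 xb0 : Fin n → ℝ) (σ : ℕ → Fin s) (σb : ℕ → Fin sb),
            ∀ k < N, swaOut A C f σ x0 k = swaOut Ab Cb fb σb xb0 k)) :=
  finite_detectability_threshold_general s sb n
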